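/- Let R be a commutative ring, 𝔗 a torsion theory over R, y₁,…,y_r a finite sequence of elements of R, and M an R-module with M ∈ 𝔗. Then H^i_y(M) ∈ 𝔗 for all i ≥ 0, where H^i_y(M) denotes the i-th Čech cohomology of M with respect to y₁,…,y_r. In particular, every torsion theory is closed under localization: S^{-1}M ∈ 𝔗 for every multiplicatively closed subset S of R. -/

import Mathlib

open CategoryTheory

universe u

noncomputable section

/-- A torsion theory over `R`: a class of `R`-modules closed under isomorphism, submodules,
quotient modules, extensions, and directed colimits (formulated as closure under directed
unions of submodules). -/
structure IsTorsionTheory (R : Type u) [CommRing R] (T : Set (ModuleCat.{u} R)) : Prop where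
  mem_of_iso : ∀ {N N' : ModuleCat.{u} R}, (N ≅ N') → N ∈ T → N' ∈ T
  submodule_mem : ∀ {N : ModuleCat.{u} R}, N ∈ T → ∀ S : Submodule R N,
    ModuleCat.of R S ∈ T
  quotient_mem : ∀ {N : ModuleCat.{u} R}, N ∈ T → ∀ S : Submodule R N,
    ModuleCat.of R (N ⧸ S) ∈ T
  ext_mem : ∀ {N : ModuleCat.{u} R} (S : Submodule R N),
    ModuleCat.of R S ∈ T → ModuleCat.of R (N ⧸ S) ∈ T → N ∈ T
  directed_mem : ∀ {N : ModuleCat.{u} R} {ι : Type u} [Nonempty ι] (S : ι → Submodule R N),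
    Directed (· ≤ ·) S → (∀ i, ModuleCat.of R (S i) ∈ T) → iSup S = ⊤ → N ∈ T

variable {R : Type u} [CommRing R]

/-- The canonical map between localized modules along an inclusion of submonoids. -/
def locMap {S T : Submonoid R} (h : S ≤ T) (M : Type u) [AddCommGroup M]
    [Module R M] : LocalizedModule S M →ₗ[R] LocalizedModule T M :=
  LocalizedModule.lift S (LocalizedModule.mkLinearMap T M)
    (fun s => IsLocalizedModule.map_units (LocalizedModule.mkLinearMap T M) ⟨s.1, h s.2⟩)

/-- The component of the Čech complex of `M` with respect to `x` indexed by a subset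
`s ⊆ {1, …, r}`: the localization of `M` at the products of the `x j`, `j ∈ s`. -/
abbrev cechComponent {r : ℕ} (x : Fin r → R) (M : Type u) [AddCommGroup M] [Module R M]
    (s : Finset (Fin r)) : Type u :=
  LocalizedModule (Submonoid.closure (x '' ↑s)) M

/-- The "outgoing" differential of the Čech complex of `M` with respect to `x₁, …, x_r`. -/
def cechDiff {r : ℕ} (x : Fin r → R) (M : Type u) [AddCommGroup M] [Module R M]
    (i : ℕ) :
    (∀ s : {s : Finset (Fin r) // s.card = i}, cechComponent x M s.1) →ₗ[R]
      (∀ s : {s : Finset (Fin r) // s.card = i + 1}, cechComponent x M s.1) where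
  toFun φ t := ∑ j ∈ t.1.attach,
    ((-1 : R) ^ (t.1.filter (fun k => k < j.1)).card) •
      locMap (Submonoid.closure_mono
          (Set.image_mono (f := x) (Finset.coe_subset.mpr (Finset.erase_subset j.1 t.1)))) M
        (φ ⟨t.1.erase j.1, by simp [Finset.card_erase_of_mem j.2, t.2]⟩)
  map_add' φ ψ := by
    funext t
    simp [Finset.sum_add_distrib, smul_add]
  map_smul' c φ := by
    funext t
    simp [Finset.smul_sum, smul_comm c]

/-- The "incoming" differential of the Čech complex in degree `i`
(its source is trivial when `i = 0`). -/
def cechDiffIn {r : ℕ} (x : Fin r → R) (M : Type u) [AddCommGroup M] [Module R M]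
    (i : ℕ) :
    (∀ s : {s : Finset (Fin r) // s.card + 1 = i}, cechComponent x M s.1) →ₗ[R]
      (∀ s : {s : Finset (Fin r) // s.card = i}, cechComponent x M s.1) where
  toFun φ t := ∑ j ∈ t.1.attach,
    ((-1 : R) ^ (t.1.filter (fun k => k < j.1)).card) •
      locMap (Submonoid.closure_mono
          (Set.image_mono (f := x) (Finset.coe_subset.mpr (Finset.erase_subset j.1 t.1)))) M
        (φ ⟨t.1.erase j.1, by rw [Finset.card_erase_add_one j.2]; exact t.2⟩)
  map_add' φ ψ := by
    funext t
    simp [Finset.sum_add_distrib, smul_add]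
  map_smul' c φ := by
    funext t
    simp [Finset.smul_sum, smul_comm c]

/-- The `i`-th Čech cohomology `H^i_x(M)` of `M` with respect to `x₁, …, x_r`. -/
abbrev cechCohomology {r : ℕ} (x : Fin r → R) (M : Type u) [AddCommGroup M]
    [Module R M] (i : ℕ) : Type u :=
  ↥(LinearMap.ker (cechDiff x M i)) ⧸
    (Submodule.comap (LinearMap.ker (cechDiff x M i)).subtype
      (LinearMap.range (cechDiffIn x M i)))

/-- The `𝔗`-Čech grade of the ideal `(x₁, …, x_r)` on `M`: the infimum of the set of `i`
such that `H^i_x(M) ∉ 𝔗` (with `inf ∅ = +∞`). -/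
def TCgrade (T : Set (ModuleCat.{u} R)) {r : ℕ} (x : Fin r → R) (M : Type u)
    [AddCommGroup M] [Module R M] : ℕ∞ :=
  sInf ((↑· : ℕ → ℕ∞) '' {i | ModuleCat.of R (cechCohomology x M i) ∉ T})

/-!
`H^i_y(M)` is a subquotient of the finite product `∏_{|s| = i} M_{y_s}` of localizations of `M`,
so it suffices that a torsion theory is closed under finite products and localization. Finite
products are iterated extensions. A localization `S⁻¹M` is the directed union over `s ∈ S` of
the submodules `{m / s | m ∈ M}`, each of which is a quotient of `M`.
-/

namespace IsTorsionTheory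

variable {T : Set (ModuleCat.{u} R)}
  {N P : Type u} [AddCommGroup N] [Module R N] [AddCommGroup P] [Module R P]

theorem mem_of_injective (hT : IsTorsionTheory R T) (f : N →ₗ[R] P)
    (hf : Function.Injective f) (hP : ModuleCat.of R P ∈ T) : ModuleCat.of R N ∈ T :=
  hT.mem_of_iso (LinearEquiv.ofInjective f hf).symm.toModuleIso
    (hT.submodule_mem hP (LinearMap.range f))

theorem mem_of_surjective (hT : IsTorsionTheory R T) (f : N →ₗ[R] P)
    (hf : Function.Surjective f) (hN : ModuleCat.of R N ∈ T) : ModuleCat.of R P ∈ T :=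
  hT.mem_of_iso (f.quotKerEquivOfSurjective hf).toModuleIso
    (hT.quotient_mem hN (LinearMap.ker f))

theorem mem_of_subsingleton (hT : IsTorsionTheory R T) (hne : T.Nonempty) [Subsingleton N] :
    ModuleCat.of R N ∈ T := by
  obtain ⟨P, hP⟩ := hne
  exact hT.mem_of_injective (0 : N →ₗ[R] P) (fun a b _ => Subsingleton.elim a b) hP

theorem prod_mem (hT : IsTorsionTheory R T) (hN : ModuleCat.of R N ∈ T)
    (hP : ModuleCat.of R P ∈ T) : ModuleCat.of R (N × P) ∈ T := by
  refine hT.ext_mem (LinearMap.range (LinearMap.inl R N P)) ?_ ?_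
  · exact hT.mem_of_surjective _ (LinearMap.surjective_rangeRestrict _) hN
  · rw [LinearMap.range_inl]
    exact hT.mem_of_iso ((LinearMap.snd R N P).quotKerEquivOfSurjective
      LinearMap.snd_surjective).symm.toModuleIso hP

theorem pi_mem (hT : IsTorsionTheory R T) (hne : T.Nonempty) {ι : Type u} [Finite ι]
    (N : ι → Type u) [∀ i, AddCommGroup (N i)] [∀ i, Module R (N i)]
    (hN : ∀ i, ModuleCat.of R (N i) ∈ T) : ModuleCat.of R (∀ i, N i) ∈ T := by
  induction ι using Finite.induction_empty_option with
  | of_equiv e ih =>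
    exact hT.mem_of_iso (LinearEquiv.piCongrLeft R N e).toModuleIso
      (ih (fun i => N (e i)) fun i => hN (e i))
  | h_empty => exact hT.mem_of_subsingleton hne
  | h_option ih =>
    exact hT.mem_of_iso (LinearEquiv.piOptionEquivProd (R := R)).symm.toModuleIso
      (hT.prod_mem (hN none) (ih (fun i => N (some i)) fun i => hN (some i)))

theorem localizedModule_mem (hT : IsTorsionTheory R T) (hN : ModuleCat.of R N ∈ T)
    (S : Submonoid R) : ModuleCat.of R (LocalizedModule S N) ∈ T := by
  have : Nonempty S := ⟨1⟩
  let fractionsOver (s : S) : N →ₗ[R] LocalizedModule S N :=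
    LocalizedModule.divBy s ∘ₗ LocalizedModule.mkLinearMap S N
  have fractionsOver_apply (s : S) (m : N) : fractionsOver s m = LocalizedModule.mk m s := by
    simp [fractionsOver, LocalizedModule.mkLinearMap_apply, LocalizedModule.liftOn_mk]
  refine hT.directed_mem (fun s => LinearMap.range (fractionsOver s)) ?_ ?_ ?_
  · intro s t
    refine ⟨s * t, ?_, ?_⟩
    · rintro _ ⟨m, rfl⟩
      exact ⟨t • m, by simp only [fractionsOver_apply, LocalizedModule.mk_cancel_common_right]⟩
    · rintro _ ⟨m, rfl⟩
      exact ⟨s • m, by simp only [fractionsOver_apply, LocalizedModule.mk_cancel_common_left]⟩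
  · exact fun s => hT.mem_of_surjective _ (LinearMap.surjective_rangeRestrict _) hN
  · refine eq_top_iff.mpr fun x _ => x.induction_on fun m s => ?_
    exact Submodule.mem_iSup_of_mem s ⟨m, fractionsOver_apply s m⟩

end IsTorsionTheory

/-- **Theorem.** Let `𝔗` be a torsion theory, `y₁, …, y_r` a finite sequence of elements of
`R` and `M ∈ 𝔗`. Then `H^i_y(M) ∈ 𝔗` for all `i ≥ 0`; in particular every torsion theory
is closed under localization: `S⁻¹M ∈ 𝔗` for every multiplicatively closed `S ⊆ R`. -/
theorem cechCohomology_mem_of_mem (T : Set (ModuleCat.{u} R)) (hT : IsTorsionTheory R T)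
    {r : ℕ} (y : Fin r → R) (M : Type u) [AddCommGroup M] [Module R M]
    (hM : ModuleCat.of R M ∈ T) :
    (∀ i : ℕ, ModuleCat.of R (cechCohomology y M i) ∈ T) ∧
      ∀ S : Submonoid R, ModuleCat.of R (LocalizedModule S M) ∈ T := by
  have hloc : ∀ S : Submonoid R, ModuleCat.of R (LocalizedModule S M) ∈ T :=
    hT.localizedModule_mem hM
  refine ⟨fun i => ?_, hloc⟩
  let Subsets := {s : Finset (Fin r) // s.card = i}
  have hcochains : ModuleCat.of R (∀ s : Subsets, cechComponent y M s.1) ∈ T :=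
    hT.mem_of_iso
      (LinearEquiv.piCongrLeft R (fun s : Subsets => cechComponent y M s.1)
        Equiv.ulift).toModuleIso
      (hT.pi_mem ⟨_, hM⟩ (fun s : ULift.{u} Subsets => cechComponent y M s.down.1)
        fun _ => hloc _)
  exact hT.quotient_mem (hT.submodule_mem hcochains (LinearMap.ker (cechDiff y M i))) _
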